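/- Let f and h be problems with f ≰_W h. Then the set { D ⊆ ℕ : f ⊓ χ_D ≤_W h } is at most countable. -/
import Mathlib


namespace WeihrauchPaper

/-- Baire space ℕ^ℕ. -/
abbrev Baire : Type := ℕ → ℕ

/-- Prepend a natural number to an element of Baire space: `(cons e q) 0 = e`, `(cons e q) (n+1) = q n`. -/
def cons (e : ℕ) (q : Baire) : Baire
  | 0 => e
  | n + 1 => q n

/-- Pairing of two elements of Baire space by interleaving. -/
def pair (p q : Baire) : Baire := fun n => if n % 2 = 0 then p (n / 2) else q (n / 2)

def left (x : Baire) : Baire := fun n => x (2 * n)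
def right (x : Baire) : Baire := fun n => x (2 * n + 1)

/-- The finite initial segment of `p` of length `k`. -/
def pref (p : Baire) (k : ℕ) : List ℕ := List.ofFn fun i : Fin k => p i

/-- Result of running the `e`-th partial computable function on the pair
(code of the length-`k` prefix of `p`, input `n`). -/
def query (e : ℕ) (p : Baire) (k n : ℕ) : Part ℕ :=
  Nat.Partrec.Code.eval (Denumerable.ofNat Nat.Partrec.Code e)
    (Nat.pair (Encodable.encode (pref p k)) n)

/-- `FEval e p q` : the `e`-th partial computable functional on Baire space, applied to `p`,
is defined and equals `q`.  The value at `n` is obtained from the least prefix length `k`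
on which the computation converges, which makes the functional single-valued. -/
def FEval (e : ℕ) (p q : Baire) : Prop :=
  ∀ n, ∃ k, query e p k n = Part.some (q n) ∧ ∀ k' < k, ¬ (query e p k' n).Dom

/-- Turing reducibility on Baire space: `q ≤_T p` iff `q = Φ_e(p)` for some `e`. -/
def TuringLE (q p : Baire) : Prop := ∃ e, FEval e p q

/-- Medvedev reducibility: `A ≤_M B` iff some partial computable functional is defined on all
of `B` and maps `B` into `A`. -/
def MedLE (A B : Set Baire) : Prop := ∃ e, ∀ q ∈ B, ∃ p, FEval e q p ∧ p ∈ A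

def MedEquiv (A B : Set Baire) : Prop := MedLE A B ∧ MedLE B A

def MedLT (A B : Set Baire) : Prop := MedLE A B ∧ ¬ MedLE B A

/-- The meet `P ∧ Q := 0⌢P ∪ 1⌢Q` in the Medvedev degrees. -/
def medMeet (P Q : Set Baire) : Set Baire := (cons 0 '' P) ∪ (cons 1 '' Q)

/-- `Succ p = { e⌢q : Φ_e(q) = p and q ≰_T p }`. -/
def Succ (p : Baire) : Set Baire :=
  {x | ∃ e q, x = cons e q ∧ FEval e q p ∧ ¬ TuringLE q p}

/-- A problem (partial multi-valued function on Baire space), represented as the map sending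
an instance to its (possibly empty) set of solutions. -/
abbrev Problem : Type := Baire → Set Baire

/-- The domain of a problem: the instances having at least one solution. -/
def dom (f : Problem) : Set Baire := {x | (f x).Nonempty}

/-- Weihrauch reducibility `f ≤_W g`. -/
def WLE (f g : Problem) : Prop :=
  ∃ eΦ eΨ, ∀ p ∈ dom f, ∃ p', FEval eΦ p p' ∧ p' ∈ dom g ∧
    ∀ q ∈ g p', ∃ r, FEval eΨ (pair p q) r ∧ r ∈ f p

def WEquiv (f g : Problem) : Prop := WLE f g ∧ WLE g f

def WLT (f g : Problem) : Prop := WLE f g ∧ ¬ WLE g f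

/-- The identity on Baire space, as a problem. -/
def idB : Problem := fun p => {p}

/-- The restriction of the identity to `X ⊆ ℕ^ℕ`, as a problem. -/
def idRestrict (X : Set Baire) : Problem := fun p => {q | p ∈ X ∧ q = p}

/-- The join `f ⊔ g`, with domain `{0}×dom f ∪ {1}×dom g` (coded via `cons`). -/
def join (f g : Problem) : Problem := fun x =>
  if x 0 = 0 then f (fun n => x (n + 1))
  else if x 0 = 1 then g (fun n => x (n + 1))
  else ∅

/-- The meet `f ⊓ g`, with domain `dom f × dom g` (coded via `pair`) and
`(f ⊓ g)(x,z) = {0}×f(x) ∪ {1}×g(z)` (coded via `cons`). -/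
def meet (f g : Problem) : Problem := fun x =>
  {y | left x ∈ dom f ∧ right x ∈ dom g ∧
    ((∃ z ∈ f (left x), y = cons 0 z) ∨ (∃ z ∈ g (right x), y = cons 1 z))}

/-- The constant sequence with value `n`. -/
def const (n : ℕ) : Baire := fun _ => n

/-- The characteristic function of `D ⊆ ℕ` as a problem: defined on the constant sequences,
with `χ_D(n)` the constantly-1 sequence if `n ∈ D` and the constantly-0 sequence otherwise. -/
def chi (D : Set ℕ) : Problem := fun x =>
  {y | ∃ n, x = const n ∧ ((n ∈ D ∧ y = const 1) ∨ (n ∉ D ∧ y = const 0))}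

/-- The set of non-computable elements of Baire space. -/
def NR : Set Baire := {q | ¬ Computable q}

/-- `f` is a minimal cover of `h` in the Weihrauch degrees. -/
def MinimalCover (f h : Problem) : Prop :=
  WLT h f ∧ ¬ ∃ g, WLT h g ∧ WLT g f

/-- `f` is a strong minimal cover of `h` in the Weihrauch degrees. -/
def StrongMinimalCover (f h : Problem) : Prop :=
  WLT h f ∧ ∀ g, WLT g f → WLE g h


-- transforms
def tr1 (n : ℕ) (L : List ℕ) : List ℕ :=
  (List.range L.length).map (fun i => if i % 2 = 0 then L.getD (i/2) 0 else n)

def tr2 (n : ℕ) (L : List ℕ) : List ℕ :=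
  (List.range L.length).map
    (fun i => if i % 2 = 1 then L.getD i 0 else if (i/2) % 2 = 0 then L.getD (i/2) 0 else n)

lemma pref_length (p : Baire) (k : ℕ) : (pref p k).length = k := by simp [pref]

lemma pref_getD {p : Baire} {k i : ℕ} (h : i < k) : (pref p k)[i]?.getD 0 = p i := by
  rw [List.getElem?_eq_getElem (by simpa [pref_length] : i < (pref p k).length)]
  simp [pref]

lemma pref_getElem {p : Baire} {k i : ℕ} (h : i < (pref p k).length) : (pref p k)[i] = p i := by
  simp [pref]

lemma tr1_pref (n : ℕ) (x : Baire) (k : ℕ) :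
    tr1 n (pref x k) = pref (pair x (const n)) k := by
  apply List.ext_getElem
  · simp [tr1, pref_length]
  · intro i h1 h2
    have hik : i < k := by simpa [pref_length] using h2
    rw [pref_getElem h2]
    simp only [tr1, List.getElem_map, List.getElem_range]
    by_cases hi : i % 2 = 0
    · simp [hi, pair, pref_getD (show i/2 < k from lt_of_le_of_lt (Nat.div_le_self _ _) hik)]
    · simp [hi, pair, const]

lemma tr2_pref (n : ℕ) (p q : Baire) (k : ℕ) :
    tr2 n (pref (pair p q) k) = pref (pair (pair p (const n)) q) k := by
  apply List.ext_getElem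
  · simp [tr2, pref_length]
  · intro i h1 h2
    have hik : i < k := by simpa [pref_length] using h2
    rw [pref_getElem h2]
    simp only [tr2, List.getElem_map, List.getElem_range]
    by_cases hi : i % 2 = 1
    · have h0 : i % 2 ≠ 0 := by omega
      simp [hi, pair, h0, pref_getD hik]
    · have h0 : i % 2 = 0 := by omega
      have hlt : i / 2 < k := lt_of_le_of_lt (Nat.div_le_self _ _) hik
      by_cases hj : (i/2) % 2 = 0
      · simp [hi, h0, hj, pair, pref_getD hlt]
      · simp [hi, h0, hj, pair, const]

lemma primrec_tr1 (n : ℕ) : Primrec (tr1 n) :=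
  Primrec.list_map (Primrec.list_range.comp Primrec.list_length)
    ((Primrec.ite
      (Primrec.eq.comp (Primrec.nat_mod.comp Primrec.snd (Primrec.const 2)) (Primrec.const 0))
      ((Primrec.list_getD 0).comp Primrec.fst (Primrec.nat_div.comp Primrec.snd (Primrec.const 2)))
      (Primrec.const n)).to₂)

lemma primrec_tr2 (n : ℕ) : Primrec (tr2 n) :=
  Primrec.list_map (Primrec.list_range.comp Primrec.list_length)
    ((Primrec.ite
      (Primrec.eq.comp (Primrec.nat_mod.comp Primrec.snd (Primrec.const 2)) (Primrec.const 1))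
      ((Primrec.list_getD 0).comp Primrec.fst Primrec.snd)
      (Primrec.ite
        (Primrec.eq.comp
          (Primrec.nat_mod.comp (Primrec.nat_div.comp Primrec.snd (Primrec.const 2)) (Primrec.const 2))
          (Primrec.const 0))
        ((Primrec.list_getD 0).comp Primrec.fst
          (Primrec.nat_div.comp Primrec.snd (Primrec.const 2)))
        (Primrec.const n))).to₂)

def nt (g : List ℕ → List ℕ) (u : ℕ → ℕ) : ℕ → ℕ := fun a =>
  Nat.pair (Encodable.encode (g (Denumerable.ofNat (List ℕ) a.unpair.1))) (u a.unpair.2)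

lemma primrec_nt {g : List ℕ → List ℕ} {u : ℕ → ℕ} (hg : Primrec g) (hu : Primrec u) :
    Primrec (nt g u) :=
  Primrec₂.natPair.comp
    (Primrec.encode.comp (hg.comp ((Primrec.ofNat (List ℕ)).comp
      (Primrec.fst.comp Primrec.unpair))))
    (hu.comp (Primrec.snd.comp Primrec.unpair))

lemma exists_code_comp (e : ℕ) {t : ℕ → ℕ} (ht : Primrec t) :
    ∃ e' : ℕ, ∀ a, Nat.Partrec.Code.eval (Denumerable.ofNat Nat.Partrec.Code e') a
      = Nat.Partrec.Code.eval (Denumerable.ofNat Nat.Partrec.Code e) (t a) := by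
  have h1 : Nat.Partrec (Nat.Partrec.Code.eval (Denumerable.ofNat Nat.Partrec.Code e)) :=
    Nat.Partrec.Code.exists_code.mpr ⟨_, rfl⟩
  have h2 : Partrec (fun a => Nat.Partrec.Code.eval (Denumerable.ofNat Nat.Partrec.Code e) (t a)) :=
    (Partrec.nat_iff.mpr h1).comp ht.to_comp
  obtain ⟨c, hc⟩ := Nat.Partrec.Code.exists_code.mp (Partrec.nat_iff.mp h2)
  refine ⟨Encodable.encode c, fun a => ?_⟩
  rw [Denumerable.ofNat_encode, hc]

lemma exists_phi (e n : ℕ) : ∃ e', ∀ x k m, query e' x k m = query e (pair x (const n)) k m := by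
  obtain ⟨e', he⟩ := exists_code_comp e (primrec_nt (primrec_tr1 n) Primrec.id)
  refine ⟨e', fun x k m => ?_⟩
  rw [query, he, query]
  simp [nt, Denumerable.ofNat_encode, tr1_pref]

lemma exists_psi (e n : ℕ) : ∃ e', ∀ p q k m,
    query e' (pair p q) k m = query e (pair (pair p (const n)) q) k (m + 1) := by
  obtain ⟨e', he⟩ := exists_code_comp e (primrec_nt (primrec_tr2 n) Primrec.succ)
  refine ⟨e', fun p q k m => ?_⟩
  rw [query, he, query]
  simp [nt, Denumerable.ofNat_encode, tr2_pref]

lemma FEval_unique {e : ℕ} {p q q' : Baire} (h1 : FEval e p q) (h2 : FEval e p q') : q = q' := by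
  funext m
  obtain ⟨k, hk, hmin⟩ := h1 m
  obtain ⟨k', hk', hmin'⟩ := h2 m
  have hkk : k = k' := by
    rcases lt_trichotomy k k' with h | h | h
    · exact absurd (by rw [hk]; trivial) (hmin' k h)
    · exact h
    · exact absurd (by rw [hk']; trivial) (hmin k' h)
  rw [hkk, hk'] at hk
  exact Part.some_inj.mp hk.symm


lemma left_pair (p q : Baire) : left (pair p q) = p := by
  funext m
  have h1 : 2 * m % 2 = 0 := Nat.mul_mod_right 2 m
  have h2 : 2 * m / 2 = m := by omega
  simp [left, pair, h1, h2]

lemma right_pair (p q : Baire) : right (pair p q) = q := by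
  funext m
  have h1 : (2 * m + 1) % 2 = 1 := by omega
  have h2 : (2 * m + 1) / 2 = m := by omega
  simp [right, pair, h1, h2]

lemma const_inj {a b : ℕ} (h : const a = const b) : a = b := congrFun h 0

lemma chi_val {D : Set ℕ} {n : ℕ} {w : Baire} (hw : w ∈ chi D (const n)) :
    (n ∈ D ∧ w = const 1) ∨ (n ∉ D ∧ w = const 0) := by
  obtain ⟨m, hm, hor⟩ := hw
  rwa [← const_inj hm] at hor

def Wit (eΦ eΨ : ℕ) (f g : Problem) : Prop :=
  ∀ p ∈ dom f, ∃ p', FEval eΦ p p' ∧ p' ∈ dom g ∧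
    ∀ q ∈ g p', ∃ r, FEval eΨ (pair p q) r ∧ r ∈ f p

lemma core {f h : Problem} {eΦ eΨ n : ℕ} {D D' : Set ℕ}
    (hD : Wit eΦ eΨ (meet f (chi D)) h) (hD' : Wit eΦ eΨ (meet f (chi D')) h)
    (hn : n ∈ D) (hn' : n ∉ D') : WLE f h := by
  obtain ⟨eΦ', hΦ'⟩ := exists_phi eΦ n
  obtain ⟨eΨ', hΨ'⟩ := exists_psi eΨ n
  refine ⟨eΦ', eΨ', fun p hp => ?_⟩
  have hzD : pair p (const n) ∈ dom (meet f (chi D)) := by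
    refine ⟨cons 1 (const 1), ?_, ?_, Or.inr ⟨const 1, ?_, rfl⟩⟩
    · rw [left_pair]; exact hp
    · rw [right_pair]; exact ⟨const 1, n, rfl, Or.inl ⟨hn, rfl⟩⟩
    · rw [right_pair]; exact ⟨n, rfl, Or.inl ⟨hn, rfl⟩⟩
  have hzD' : pair p (const n) ∈ dom (meet f (chi D')) := by
    refine ⟨cons 1 (const 0), ?_, ?_, Or.inr ⟨const 0, ?_, rfl⟩⟩
    · rw [left_pair]; exact hp
    · rw [right_pair]; exact ⟨const 0, n, rfl, Or.inr ⟨hn', rfl⟩⟩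
    · rw [right_pair]; exact ⟨n, rfl, Or.inr ⟨hn', rfl⟩⟩
  obtain ⟨p1, hF1, hdom1, hb1⟩ := hD _ hzD
  obtain ⟨p2, hF2, hdom2, hb2⟩ := hD' _ hzD'
  have hp12 : p2 = p1 := FEval_unique hF2 hF1
  refine ⟨p1, ?_, hdom1, fun q hq => ?_⟩
  · intro m
    obtain ⟨k, hk, hmin⟩ := hF1 m
    exact ⟨k, by rw [hΦ']; exact hk, fun k' hk' hd => hmin k' hk' (by rwa [hΦ'] at hd)⟩
  · obtain ⟨r, hFr, hr⟩ := hb1 q hq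
    obtain ⟨r2, hFr2, hr2⟩ := hb2 q (by rw [hp12]; exact hq)
    have hr21 : r2 = r := FEval_unique hFr2 hFr
    subst hr21
    obtain ⟨-, -, hcase⟩ := hr
    obtain ⟨-, -, hcase2⟩ := hr2
    rcases hcase with ⟨w, hw, hrw⟩ | ⟨w, hw, hrw⟩
    · refine ⟨w, ?_, ?_⟩
      · intro m
        obtain ⟨k, hk, hmin⟩ := hFr (m + 1)
        refine ⟨k, ?_, fun k' hk' hd => hmin k' hk' (by rwa [hΨ'] at hd)⟩
        rw [hΨ', hk, hrw]
        rfl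
      · rw [left_pair] at hw; exact hw
    · exfalso
      rcases hcase2 with ⟨w2, hw2, hrw2⟩ | ⟨w2, hw2, hrw2⟩
      · have h01 := congrFun (hrw.symm.trans hrw2) 0
        simp [cons] at h01
      · have hww : w = w2 := by
          funext m
          have := congrFun (hrw.symm.trans hrw2) (m + 1)
          simpa [cons] using this
        rw [right_pair] at hw hw2
        rcases chi_val hw with ⟨-, h1⟩ | ⟨hnd, -⟩
        · rcases chi_val hw2 with ⟨hnd', -⟩ | ⟨-, h0⟩
          · exact hn' hnd'
          · have := const_inj (h1.symm.trans (hww.trans h0))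
            omega
        · exact hnd hn


/-- If `f ≰_W h`, there are at most countably many `D ⊆ ℕ` with `f ⊓ χ_D ≤_W h`. -/
theorem countable_chi_meet (f h : Problem) (hfh : ¬ WLE f h) :
    {D : Set ℕ | WLE (meet f (chi D)) h}.Countable := by
  rw [Set.countable_iff_exists_injective]
  have hex : ∀ D : {D : Set ℕ | WLE (meet f (chi D)) h},
      ∃ ee : ℕ × ℕ, Wit ee.1 ee.2 (meet f (chi D.1)) h := by
    rintro ⟨D, hD⟩
    obtain ⟨a, b, w⟩ := hD
    exact ⟨(a, b), w⟩
  choose F hF using hex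
  refine ⟨fun D => Nat.pair (F D).1 (F D).2, fun D1 D2 hEq => ?_⟩
  obtain ⟨hEq1, hEq2⟩ := Nat.pair_eq_pair.mp hEq
  have h12 : F D1 = F D2 := Prod.ext hEq1 hEq2
  by_contra hne
  have hne' : D1.1 ≠ D2.1 := fun hh => hne (Subtype.ext hh)
  have : ∃ n, (n ∈ D1.1 ∧ n ∉ D2.1) ∨ (n ∈ D2.1 ∧ n ∉ D1.1) := by
    by_contra hno
    push_neg at hno
    apply hne'
    ext n
    specialize hno n
    tauto
  obtain ⟨n, hcase⟩ := this
  have w1 := hF D1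
  have w2 := hF D2
  rw [h12] at w1
  rcases hcase with ⟨h1, h2⟩ | ⟨h1, h2⟩
  · exact hfh (core w1 w2 h1 h2)
  · exact hfh (core w2 w1 h1 h2)

end WeihrauchPaper
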